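/- Let Γ be a finite self 2-distance graph with no 4-cycle subgraph. Then the triangles of Γ are pairwise vertex-disjoint: any two distinct triangles of Γ have no vertex in common. -/

import Mathlib

open SimpleGraph

/-!
If two triangles of a `C₄`-free graph `Γ` met in two vertices `x, y`, their third vertices `p ≠ r`
would give the 4-cycle `p x r y`. So two distinct triangles meeting at all meet in a single vertex
`v`, say `{v, a, b}` and `{v, c, d}`. No edge can join `{a, b}` to `{c, d}` (an edge `ac` closes the
4-cycle `a c v b`), hence `a c b d` is a 4-cycle of `Γ₂`, and the isomorphism `Γ₂ ≃ Γ` carries it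
to a 4-cycle of `Γ`.
-/

/-- The 2-distance graph of a graph `G`: two distinct vertices are adjacent
iff their distance in `G` equals `2`. -/
def twoDistGraph {V : Type*} (G : SimpleGraph V) : SimpleGraph V where
  Adj u v := G.dist u v = 2
  symm := by
    constructor
    intro u v h
    show G.dist v u = 2
    rwa [SimpleGraph.dist_comm]
  loopless := by
    constructor
    intro v h
    show False
    simp [SimpleGraph.dist_self] at h

/-- `G` has an `n`-cycle subgraph: `n` distinct vertices `v 0, …, v (n-1)` with
`v i` adjacent to `v (i+1 mod n)` for all `i`. -/
def HasNCycle {V : Type*} (G : SimpleGraph V) (n : ℕ) : Prop :=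
  ∃ v : ZMod n → V, Function.Injective v ∧ ∀ i, G.Adj (v i) (v (i + 1))

/-- The edged product `C₅|C₃`: a pentagon and a triangle glued along an edge. -/
def C5C3 : SimpleGraph (Fin 6) :=
  SimpleGraph.fromEdgeSet {s(0,1), s(1,2), s(2,3), s(3,4), s(4,5), s(5,0), s(1,5)}

open Finset

theorem Finset.exists_eq_insert_pair_of_card_eq_three {α : Type*} [DecidableEq α] {s : Finset α}
    {x : α} (hs : #s = 3) (hx : x ∈ s) : ∃ a b, s = {x, a, b} := by
  obtain ⟨a, b, -, hab⟩ := card_eq_two.mp (by rw [card_erase_of_mem hx, hs] : #(s.erase x) = 2)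
  exact ⟨a, b, by rw [← hab, insert_erase hx]⟩

theorem Finset.exists_eq_insert_insert_of_card_eq_three {α : Type*} [DecidableEq α]
    {s : Finset α} {x y : α} (hs : #s = 3) (hx : x ∈ s) (hy : y ∈ s) (hxy : x ≠ y) :
    ∃ z, s = {x, y, z} := by
  have hy' : y ∈ s.erase x := mem_erase.mpr ⟨hxy.symm, hy⟩
  obtain ⟨z, hz⟩ := card_eq_one.mp
    (by rw [card_erase_of_mem hy', card_erase_of_mem hx, hs] : #((s.erase x).erase y) = 1)
  exact ⟨z, by rw [← hz, insert_erase hy', insert_erase hx]⟩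

namespace SimpleGraph

variable {V : Type*} {G : SimpleGraph V} {s t : Finset V} {a b c d v : V}

theorem HasNCycle.map {W : Type*} {H : SimpleGraph W} {n : ℕ} (hG : HasNCycle G n)
    (f : Copy G H) : HasNCycle H n := by
  obtain ⟨w, hw, hadj⟩ := hG
  exact ⟨f ∘ w, f.injective.comp hw, fun i => f.toHom.map_adj (hadj i)⟩

theorem hasNCycle_four_of_adj (hab : G.Adj a b) (hbc : G.Adj b c) (hcd : G.Adj c d)
    (hda : G.Adj d a) (hac : a ≠ c) (hbd : b ≠ d) : HasNCycle G 4 := by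
  have := hab.ne; have := hbc.ne; have := hcd.ne; have := hda.ne
  refine ⟨![a, b, c, d], fun i j h => ?_, fun i => ?_⟩
  · fin_cases i <;> fin_cases j <;> simp_all <;> rfl
  · fin_cases i <;> simp_all <;> assumption

theorem twoDistGraph_adj_of_adj_of_adj (hac : a ≠ c) (hnac : ¬ G.Adj a c) (hva : G.Adj v a)
    (hvc : G.Adj v c) : (twoDistGraph G).Adj a c := by
  change (G.edist a c).toNat = 2
  rw [edist_eq_two_iff.mpr ⟨hac, hnac, v, hva.symm, hvc.symm⟩]
  rfl

theorem twoDistGraph_adj_of_not_hasNCycle_four (h4 : ¬ HasNCycle G 4) (hab : G.Adj a b)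
    (hva : G.Adj v a) (hvb : G.Adj v b) (hvc : G.Adj v c) (hac : a ≠ c) (hbc : b ≠ c) :
    (twoDistGraph G).Adj a c :=
  twoDistGraph_adj_of_adj_of_adj hac
    (fun hac' => h4 (hasNCycle_four_of_adj hac' hvc.symm hvb hab.symm hva.ne' hbc.symm)) hva hvc

variable [DecidableEq V]

theorem IsNClique.exists_eq_insert_pair_of_mem (hs : G.IsNClique 3 s) (hv : v ∈ s) :
    ∃ a b, s = {v, a, b} ∧ G.Adj v a ∧ G.Adj v b ∧ G.Adj a b := by
  obtain ⟨a, b, rfl⟩ := exists_eq_insert_pair_of_card_eq_three hs.card_eq hv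
  exact ⟨a, b, rfl, is3Clique_triple_iff.mp hs⟩

theorem IsNClique.card_inter_le_one_of_not_hasNCycle_four (h4 : ¬ HasNCycle G 4)
    (hs : G.IsNClique 3 s) (ht : G.IsNClique 3 t) (hst : s ≠ t) : #(s ∩ t) ≤ 1 := by
  refine card_le_one.mpr fun x hx y hy => by_contra fun hxy => h4 ?_
  obtain ⟨p, rfl⟩ := exists_eq_insert_insert_of_card_eq_three hs.card_eq
    (mem_inter.mp hx).1 (mem_inter.mp hy).1 hxy
  obtain ⟨r, rfl⟩ := exists_eq_insert_insert_of_card_eq_three ht.card_eq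
    (mem_inter.mp hx).2 (mem_inter.mp hy).2 hxy
  obtain ⟨hxy, hxp, hyp⟩ := is3Clique_triple_iff.mp hs
  obtain ⟨-, hxr, hyr⟩ := is3Clique_triple_iff.mp ht
  exact hasNCycle_four_of_adj hxp.symm hxr hyr.symm hyp (fun hpr => hst (by rw [hpr])) hxy.ne

theorem IsNClique.hasNCycle_four_twoDistGraph_of_mem_inter (h4 : ¬ HasNCycle G 4)
    (hs : G.IsNClique 3 s) (ht : G.IsNClique 3 t) (hst : s ≠ t) (hvs : v ∈ s) (hvt : v ∈ t) :
    HasNCycle (twoDistGraph G) 4 := by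
  have hinter := hs.card_inter_le_one_of_not_hasNCycle_four h4 ht hst
  obtain ⟨a, b, rfl, hva, hvb, hab⟩ := hs.exists_eq_insert_pair_of_mem hvs
  obtain ⟨c, d, rfl, hvc, hvd, hcd⟩ := ht.exists_eq_insert_pair_of_mem hvt
  have hnotMem : ∀ x, G.Adj v x → x ∈ ({v, a, b} : Finset V) → x ∉ ({v, c, d} : Finset V) :=
    fun x hvx hxs hxt => hvx.ne (card_le_one.mp hinter v (by simp) x (mem_inter.mpr ⟨hxs, hxt⟩))
  have ha := hnotMem a hva (by simp)
  have hb := hnotMem b hvb (by simp)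
  simp only [mem_insert, mem_singleton, not_or] at ha hb
  exact hasNCycle_four_of_adj
    (twoDistGraph_adj_of_not_hasNCycle_four h4 hab hva hvb hvc ha.2.1 hb.2.1)
    (twoDistGraph_adj_of_not_hasNCycle_four h4 hab.symm hvb hva hvc hb.2.1 ha.2.1).symm
    (twoDistGraph_adj_of_not_hasNCycle_four h4 hab.symm hvb hva hvd hb.2.2 ha.2.2)
    (twoDistGraph_adj_of_not_hasNCycle_four h4 hab hva hvb hvd ha.2.2 hb.2.2).symm
    hab.ne hcd.ne

end SimpleGraph

theorem triangles_disjoint_of_c4Free_general {V : Type*} (G : SimpleGraph V)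
    (hself : Nonempty (twoDistGraph G ≃g G))
    (h4 : ¬ HasNCycle G 4) :
    ∀ s t : Finset V, G.IsNClique 3 s → G.IsNClique 3 t → s ≠ t → Disjoint s t := by
  classical
  intro s t hs ht hst
  refine disjoint_left.mpr fun v hvs hvt => ?_
  obtain ⟨φ⟩ := hself
  exact h4 ((hs.hasNCycle_four_twoDistGraph_of_mem_inter h4 ht hst hvs hvt).map φ.toCopy)

/-- In a self 2-distance graph with no 4-cycle subgraph, distinct triangles are
vertex-disjoint. -/
theorem triangles_disjoint_of_c4Free {V : Type*} [Fintype V] (G : SimpleGraph V)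
    (hself : Nonempty (twoDistGraph G ≃g G))
    (h4 : ¬ HasNCycle G 4) :
    ∀ s t : Finset V, G.IsNClique 3 s → G.IsNClique 3 t → s ≠ t → Disjoint s t :=
  triangles_disjoint_of_c4Free_general G hself h4
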